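/- For 0 ≤ ν ≤ l, the ν-th q^{-1}-derivative with respect to y of a_l(x,y;m) = [x+(q^m-1)y]^{[l]} equals β(l,ν) q^{-σ_ν} α(m,ν) a_{l-ν}(x,y;m-ν), and the ν-th q^{-1}-derivative of b_l(x,y;m) = (x-y)^{[l]} equals (-1)^ν β(l,ν) b_{l-ν}(x,y;m). -/

import Mathlib

noncomputable section

/-- `alphaQ q a u = ∏_{i=0}^{u-1} (q^a - q^i)`, with integer exponent `a`. -/
def alphaQ (q : ℚ) (a : ℤ) (u : ℕ) : ℚ :=
  ∏ i ∈ Finset.range u, (q ^ a - q ^ (i : ℤ))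

/-- The Gaussian binomial `[a choose b]_q = α(a,b)/α(b,b)`. -/
def gaussQ (q : ℚ) (a b : ℕ) : ℚ := alphaQ q a b / alphaQ q b b

/-- `sig l = l(l-1)/2`. -/
def sig (l : ℕ) : ℕ := l * (l - 1) / 2

/-- `betaQ q a u = ∏_{i=0}^{u-1} (q^(a-i) - 1)/(q - 1)` (natural subtraction in the
exponent). -/
def betaQ (q : ℚ) (a u : ℕ) : ℚ :=
  ∏ i ∈ Finset.range u, (q ^ (a - i) - 1) / (q - 1)

/-- A homogeneous polynomial in `x, y` of degree `deg`, whose coefficients depend on an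
integer parameter `m`: `coeff m i` is the coefficient of `y^i x^(deg - i)` (coefficients
with `i > deg` are regarded as zero). -/
structure QPoly where
  deg : ℕ
  coeff : ℤ → ℕ → ℚ

/-- The q-product `a * b`: a homogeneous polynomial of degree `r + s` whose coefficient of
`y^u x^(r+s-u)` is `∑_{i=0}^u q^(i·s) aᵢ(m) b_{u-i}(m-i)`, where `s` is the degree of `b`. -/
def qMul (q : ℚ) (a b : QPoly) : QPoly :=
  ⟨a.deg + b.deg, fun m u =>
    ∑ i ∈ Finset.range (u + 1), q ^ (i * b.deg) * a.coeff m i * b.coeff (m - i) (u - i)⟩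

/-- The constant polynomial `1`. -/
def qOne : QPoly := ⟨0, fun _ u => if u = 0 then 1 else 0⟩

/-- The `l`-th q-power: `a^[0] = 1` and `a^[l] = a^[l-1] * a`. -/
def qPow (q : ℚ) (a : QPoly) : ℕ → QPoly
  | 0 => qOne
  | l + 1 => qMul q (qPow q a l) a

/-- Evaluation of a homogeneous polynomial at `(x, y)`, with parameter `m`. -/
def QPoly.eval (a : QPoly) (m : ℤ) (x y : ℚ) : ℚ :=
  ∑ u ∈ Finset.range (a.deg + 1), a.coeff m u * y ^ u * x ^ (a.deg - u)

/-- The homogeneous polynomial `x + (q^m - 1) y` of degree 1. -/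
def polyXA (q : ℚ) : QPoly :=
  ⟨1, fun m u => if u = 0 then 1 else if u = 1 then q ^ m - 1 else 0⟩

/-- The homogeneous polynomial `x - y` of degree 1. -/
def polyXB : QPoly :=
  ⟨1, fun _ u => if u = 0 then 1 else if u = 1 then -1 else 0⟩

/-- The q⁻¹-derivative with respect to `y` of a two-variable function `g(x, y)`. -/
def qInvDerivY (q : ℚ) (g : ℚ → ℚ → ℚ) : ℚ → ℚ → ℚ :=
  fun x y => (g x (q⁻¹ * y) - g x y) / ((q⁻¹ - 1) * y)

/-! Expanding the q-products, Pascal's rule for Gaussian binomials shows that the coefficient of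
`y^u x^(l-u)` is `[l choose u]_q α(m,u)` in `a_l(m)` and `(-1)^u q^(σ_u) [l choose u]_q` in `b_l`.
The q⁻¹-derivative sends `y^(u+1)` to `[u+1]_(q⁻¹) y^u`, and the absorption identity
`[l+1 choose u+1]_q [u+1]_q = [l+1]_q [l choose u]_q` turns one derivative of `a_(l+1)(m)` into
`[l+1]_q (q^m - 1) a_l(m-1)` and of `b_(l+1)` into `-[l+1]_q b_l`. Iterating, these factors multiply
out to `β(l,ν) q^(-σ_ν) α(m,ν)` and `(-1)^ν β(l,ν)`. -/

open Finset

section QAnalogues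

variable {q : ℚ}

lemma sig_succ (n : ℕ) : sig (n + 1) = sig n + n := by
  rw [sig, sig, ← Nat.choose_two_right, ← Nat.choose_two_right, Nat.choose_succ_succ',
    Nat.choose_one_right, add_comm]

lemma pow_mul_zpow_sub_sub_one (hq : q ≠ 0) (m : ℤ) (v : ℕ) :
    q ^ v * (q ^ (m - v) - 1) = q ^ m - q ^ v := by
  rw [mul_sub, mul_one, ← zpow_natCast, ← zpow_add₀ hq, add_sub_cancel]

lemma alphaQ_succ (m : ℤ) (v : ℕ) : alphaQ q m (v + 1) = alphaQ q m v * (q ^ m - q ^ v) := by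
  simp [alphaQ, prod_range_succ]

lemma alphaQ_succ' (hq : q ≠ 0) (m : ℤ) (v : ℕ) :
    alphaQ q m (v + 1) = (q ^ m - 1) * q ^ v * alphaQ q (m - 1) v := by
  have factor (i : ℕ) : q ^ m - q ^ (i + 1) = q * (q ^ (m - 1) - q ^ i) := by
    rw [mul_sub, ← zpow_one_add₀ hq, add_sub_cancel, pow_succ']
  simp only [alphaQ, zpow_natCast, prod_range_succ', factor,
    prod_mul_distrib, prod_const, card_range, pow_zero]
  ring

lemma alphaQ_self_ne_zero (hq : 1 < q) (u : ℕ) : alphaQ q u u ≠ 0 := by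
  simp only [alphaQ, zpow_natCast, prod_ne_zero_iff, mem_range]
  exact fun i hi => sub_ne_zero.mpr (pow_lt_pow_right₀ hq hi).ne'

lemma gaussQ_zero_right (l : ℕ) : gaussQ q l 0 = 1 := by
  simp [gaussQ, alphaQ]

lemma gaussQ_of_lt {l u : ℕ} (h : l < u) : gaussQ q l u = 0 := by
  rw [gaussQ, alphaQ, prod_eq_zero (mem_range.mpr h) (sub_self _), zero_div]

lemma gaussQ_succ_succ (hq : 1 < q) (l u : ℕ) :
    gaussQ q (l + 1) (u + 1) * (q ^ (u + 1) - 1) = (q ^ (l + 1) - 1) * gaussQ q l u := by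
  have hq0 : q ≠ 0 := by positivity
  have hα := alphaQ_self_ne_zero hq u
  have hu : q ^ (u + 1) - 1 ≠ 0 := sub_ne_zero.mpr (one_lt_pow₀ hq (by omega)).ne'
  rw [gaussQ, gaussQ, alphaQ_succ' hq0, alphaQ_succ' hq0, zpow_natCast, zpow_natCast,
    Nat.cast_succ, add_sub_cancel_right, Nat.cast_succ, add_sub_cancel_right]
  field_simp

lemma gaussQ_succ_right (hq : 1 < q) (l u : ℕ) :
    gaussQ q l (u + 1) * ((q ^ (u + 1) - 1) * q ^ u) = (q ^ l - q ^ u) * gaussQ q l u := by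
  have hq0 : q ≠ 0 := by positivity
  have hα := alphaQ_self_ne_zero hq u
  have hu : q ^ (u + 1) - 1 ≠ 0 := sub_ne_zero.mpr (one_lt_pow₀ hq (by omega)).ne'
  rw [gaussQ, gaussQ, alphaQ_succ, alphaQ_succ' hq0, zpow_natCast, zpow_natCast,
    Nat.cast_succ, add_sub_cancel_right]
  field_simp

lemma gaussQ_pascal (hq : 1 < q) (l u : ℕ) :
    gaussQ q (l + 1) (u + 1) = q ^ (u + 1) * gaussQ q l (u + 1) + gaussQ q l u := by
  have hu : (q ^ (u + 1) - 1) * q ^ u ≠ 0 :=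
    mul_ne_zero (sub_ne_zero.mpr (one_lt_pow₀ hq (by omega)).ne') (by positivity)
  refine mul_right_cancel₀ hu ?_
  linear_combination q ^ u * gaussQ_succ_succ hq l u - q ^ (u + 1) * gaussQ_succ_right hq l u

lemma betaQ_succ (l ν : ℕ) : betaQ q l (ν + 1) = betaQ q l ν * ((q ^ (l - ν) - 1) / (q - 1)) :=
  prod_range_succ _ _

end QAnalogues

namespace QPoly

def linear (c : ℤ → ℚ) : QPoly :=
  ⟨1, fun m u => if u = 0 then 1 else if u = 1 then c m else 0⟩

lemma polyXA_eq_linear (q : ℚ) : polyXA q = linear fun m => q ^ m - 1 := rfl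

lemma polyXB_eq_linear : polyXB = linear fun _ => -1 := rfl

variable {q : ℚ}

lemma deg_qPow (a : QPoly) (l : ℕ) : (qPow q a l).deg = l * a.deg := by
  induction l with
  | zero => simp [qPow, qOne]
  | succ l ih => simp [qPow, qMul, ih, add_mul]

lemma deg_qPow_polyXA (l : ℕ) : (qPow q (polyXA q) l).deg = l := by
  simp [deg_qPow, polyXA]

lemma deg_qPow_polyXB (l : ℕ) : (qPow q polyXB l).deg = l := by
  simp [deg_qPow, polyXB]

lemma coeff_qOne (m : ℤ) (u : ℕ) : qOne.coeff m u = if u = 0 then 1 else 0 := rfl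

lemma coeff_qMul_linear_zero (a : QPoly) (c : ℤ → ℚ) (m : ℤ) :
    (qMul q a (linear c)).coeff m 0 = a.coeff m 0 := by
  simp [qMul, linear]

lemma coeff_qMul_linear_succ (a : QPoly) (c : ℤ → ℚ) (m : ℤ) (v : ℕ) :
    (qMul q a (linear c)).coeff m (v + 1) =
      q ^ (v + 1) * a.coeff m (v + 1) + q ^ v * c (m - v) * a.coeff m v := by
  simp only [qMul, linear]
  rw [sum_range_succ, sum_range_succ, sum_eq_zero fun i hi => ?_]
  · simp; ring
  · have : v + 1 - i ≠ 0 ∧ v + 1 - i ≠ 1 := by simp at hi; omega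
    simp [this]

end QPoly

section Coefficients

open QPoly

variable {q : ℚ}

lemma coeff_qPow_polyXA (hq : 1 < q) (l : ℕ) (m : ℤ) (u : ℕ) :
    (qPow q (polyXA q) l).coeff m u = gaussQ q l u * alphaQ q m u := by
  induction l generalizing u with
  | zero =>
    rcases u with _ | u
    · simp [qPow, coeff_qOne, gaussQ_zero_right, alphaQ]
    · simp [qPow, coeff_qOne, gaussQ_of_lt (Nat.succ_pos u)]
  | succ l ih =>
    rw [qPow, polyXA_eq_linear]
    rcases u with _ | u
    · rw [coeff_qMul_linear_zero, ← polyXA_eq_linear, ih, gaussQ_zero_right, gaussQ_zero_right]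
    · rw [coeff_qMul_linear_succ, ← polyXA_eq_linear, ih, ih, gaussQ_pascal hq, alphaQ_succ,
        ← pow_mul_zpow_sub_sub_one (by positivity) m u]
      ring

lemma coeff_qPow_polyXB (hq : 1 < q) (l : ℕ) (m : ℤ) (u : ℕ) :
    (qPow q polyXB l).coeff m u = (-1) ^ u * q ^ sig u * gaussQ q l u := by
  induction l generalizing u with
  | zero =>
    rcases u with _ | u
    · simp [qPow, coeff_qOne, gaussQ_zero_right, sig]
    · simp [qPow, coeff_qOne, gaussQ_of_lt (Nat.succ_pos u)]
  | succ l ih =>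
    rw [qPow, polyXB_eq_linear]
    rcases u with _ | u
    · rw [coeff_qMul_linear_zero, ← polyXB_eq_linear, ih, gaussQ_zero_right, gaussQ_zero_right]
    · rw [coeff_qMul_linear_succ, ← polyXB_eq_linear, ih, ih, gaussQ_pascal hq, sig_succ]
      ring

lemma eval_qPow_polyXA (hq : 1 < q) (l : ℕ) (m : ℤ) (x y : ℚ) :
    (qPow q (polyXA q) l).eval m x y =
      ∑ u ∈ range (l + 1), gaussQ q l u * alphaQ q m u * y ^ u * x ^ (l - u) := by
  simp [QPoly.eval, deg_qPow_polyXA, coeff_qPow_polyXA hq]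

lemma eval_qPow_polyXB (hq : 1 < q) (l : ℕ) (m : ℤ) (x y : ℚ) :
    (qPow q polyXB l).eval m x y =
      ∑ u ∈ range (l + 1), (-1) ^ u * q ^ sig u * gaussQ q l u * y ^ u * x ^ (l - u) := by
  simp [QPoly.eval, deg_qPow_polyXB, coeff_qPow_polyXB hq]

end Coefficients

section Derivatives

variable {q : ℚ}

lemma qInvDerivY_homogeneous (hq : q ≠ 1) (c : ℕ → ℚ) (n : ℕ) (x : ℚ) {y : ℚ} (hy : y ≠ 0) :
    qInvDerivY q (fun s t => ∑ u ∈ range (n + 2), c u * t ^ u * s ^ (n + 1 - u)) x y =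
      ∑ v ∈ range (n + 1),
        ((q⁻¹) ^ (v + 1) - 1) / (q⁻¹ - 1) * c (v + 1) * y ^ v * x ^ (n - v) := by
  have hq' : q⁻¹ - 1 ≠ 0 := sub_ne_zero.mpr (inv_ne_one.mpr hq)
  rw [qInvDerivY, div_eq_iff (mul_ne_zero hq' hy), ← sum_sub_distrib, sum_range_succ', sum_mul]
  simp only [pow_zero, sub_self, add_zero, Nat.add_sub_add_right]
  refine sum_congr rfl fun v _ => ?_
  generalize q⁻¹ = p at hq' ⊢
  field_simp
  ring

lemma inv_pow_succ_sub_one_div_inv_sub_one (hq0 : q ≠ 0) (hq1 : q ≠ 1) (n : ℕ) :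
    ((q⁻¹) ^ (n + 1) - 1) / (q⁻¹ - 1) = (q ^ (n + 1) - 1) / ((q - 1) * q ^ n) := by
  have : q - 1 ≠ 0 := sub_ne_zero.mpr hq1
  have : q⁻¹ - 1 ≠ 0 := sub_ne_zero.mpr (inv_ne_one.mpr hq1)
  rw [div_eq_div_iff (by assumption) (by positivity), inv_pow]
  field_simp
  ring

lemma qInvDerivY_iterate_succ_of_eq (hq : q ≠ 0) {f g : ℚ → ℚ → ℚ} {c : ℚ} {ν : ℕ}
    (h : ∀ x y, y ≠ 0 → (qInvDerivY q)^[ν] f x y = c * g x y) (x : ℚ) {y : ℚ} (hy : y ≠ 0) :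
    (qInvDerivY q)^[ν + 1] f x y = c * qInvDerivY q g x y := by
  rw [Function.iterate_succ_apply', qInvDerivY, qInvDerivY, h x y hy,
    h x _ (mul_ne_zero (inv_ne_zero hq) hy), ← mul_sub, mul_div_assoc]

lemma qInvDerivY_eval_qPow_polyXA (hq : 1 < q) (l : ℕ) (m : ℤ) (x : ℚ) {y : ℚ} (hy : y ≠ 0) :
    qInvDerivY q (fun s t => (qPow q (polyXA q) (l + 1)).eval m s t) x y =
      (q ^ (l + 1) - 1) / (q - 1) * (q ^ m - 1) * (qPow q (polyXA q) l).eval (m - 1) x y := by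
  have hq0 : q ≠ 0 := by positivity
  have hq1 : q - 1 ≠ 0 := sub_ne_zero.mpr hq.ne'
  simp only [eval_qPow_polyXA hq]
  rw [qInvDerivY_homogeneous hq.ne' _ _ _ hy, mul_sum]
  refine sum_congr rfl fun v _ => ?_
  rw [inv_pow_succ_sub_one_div_inv_sub_one hq0 hq.ne', alphaQ_succ' hq0]
  field_simp
  linear_combination (q ^ m - 1) * alphaQ q (m - 1) v * x ^ (l - v) * gaussQ_succ_succ hq l v

lemma qInvDerivY_eval_qPow_polyXB (hq : 1 < q) (l : ℕ) (m : ℤ) (x : ℚ) {y : ℚ} (hy : y ≠ 0) :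
    qInvDerivY q (fun s t => (qPow q polyXB (l + 1)).eval m s t) x y =
      -((q ^ (l + 1) - 1) / (q - 1)) * (qPow q polyXB l).eval m x y := by
  have hq0 : q ≠ 0 := by positivity
  have hq1 : q - 1 ≠ 0 := sub_ne_zero.mpr hq.ne'
  simp only [eval_qPow_polyXB hq]
  rw [qInvDerivY_homogeneous hq.ne' _ _ _ hy, mul_sum]
  refine sum_congr rfl fun v _ => ?_
  rw [inv_pow_succ_sub_one_div_inv_sub_one hq0 hq.ne', sig_succ]
  field_simp
  linear_combination -(-1) ^ v * q ^ v * q ^ sig v * x ^ (l - v) * gaussQ_succ_succ hq l v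

end Derivatives

section Iterates

variable {q : ℚ}

theorem qInvDerivY_iterate_qPow_polyXA (hq : 1 < q) {l ν : ℕ} (hν : ν ≤ l) (m : ℤ) (x : ℚ)
    {y : ℚ} (hy : y ≠ 0) :
    (qInvDerivY q)^[ν] (fun s t => (qPow q (polyXA q) l).eval m s t) x y =
      betaQ q l ν * q ^ (-(sig ν : ℤ)) * alphaQ q m ν *
        (qPow q (polyXA q) (l - ν)).eval (m - ν) x y := by
  induction ν generalizing x y with
  | zero => simp [betaQ, alphaQ, sig]
  | succ ν ih =>
    have hq0 : q ≠ 0 := by positivity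
    obtain ⟨k, hk⟩ : ∃ k, l - ν = k + 1 := ⟨l - ν - 1, by omega⟩
    rw [qInvDerivY_iterate_succ_of_eq hq0 (fun x _ hy => ih (by omega) x hy) x hy, hk,
      qInvDerivY_eval_qPow_polyXA hq k _ x hy, show l - (ν + 1) = k by omega, betaQ_succ, hk,
      alphaQ_succ, sig_succ, ← pow_mul_zpow_sub_sub_one hq0 m ν]
    push_cast
    rw [neg_add, zpow_add₀ hq0, sub_sub, zpow_neg q ν, zpow_natCast]
    field_simp

theorem qInvDerivY_iterate_qPow_polyXB (hq : 1 < q) {l ν : ℕ} (hν : ν ≤ l) (m : ℤ) (x : ℚ)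
    {y : ℚ} (hy : y ≠ 0) :
    (qInvDerivY q)^[ν] (fun s t => (qPow q polyXB l).eval m s t) x y =
      (-1) ^ ν * betaQ q l ν * (qPow q polyXB (l - ν)).eval m x y := by
  induction ν generalizing x y with
  | zero => simp [betaQ]
  | succ ν ih =>
    obtain ⟨k, hk⟩ : ∃ k, l - ν = k + 1 := ⟨l - ν - 1, by omega⟩
    rw [qInvDerivY_iterate_succ_of_eq (by positivity) (fun x _ hy => ih (by omega) x hy) x hy, hk,
      qInvDerivY_eval_qPow_polyXB hq k _ x hy, show l - (ν + 1) = k by omega, betaQ_succ, hk]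
    ring

end Iterates

/-- For `0 ≤ ν ≤ l`: the ν-th q⁻¹-derivative (w.r.t. `y`) of
`a_l(x,y;m) = [x+(q^m-1)y]^[l]` is `β(l,ν) q^(-σ_ν) α(m,ν) a_{l-ν}(x,y;m-ν)`, and that of
`b_l(x,y;m) = (x-y)^[l]` is `(-1)^ν β(l,ν) b_{l-ν}(x,y;m)`. -/
theorem qinv_derivative_of_basic_polynomials (q : ℕ) (hq : 2 ≤ q) :
    (∀ l ν : ℕ, ν ≤ l → ∀ (m : ℤ) (x y : ℚ), y ≠ 0 →
      (qInvDerivY (q : ℚ))^[ν] (fun s t => (qPow (q : ℚ) (polyXA (q : ℚ)) l).eval m s t) x y =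
        betaQ (q : ℚ) l ν * (q : ℚ) ^ (-(sig ν : ℤ)) * alphaQ (q : ℚ) m ν *
          (qPow (q : ℚ) (polyXA (q : ℚ)) (l - ν)).eval (m - ν) x y) ∧
    (∀ l ν : ℕ, ν ≤ l → ∀ (m : ℤ) (x y : ℚ), y ≠ 0 →
      (qInvDerivY (q : ℚ))^[ν] (fun s t => (qPow (q : ℚ) polyXB l).eval m s t) x y =
        (-1) ^ ν * betaQ (q : ℚ) l ν * (qPow (q : ℚ) polyXB (l - ν)).eval m x y) := by
  have hq' : (1 : ℚ) < q := by exact_mod_cast hq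
  exact ⟨fun _ _ hν m x _ hy => qInvDerivY_iterate_qPow_polyXA hq' hν m x hy,
    fun _ _ hν m x _ hy => qInvDerivY_iterate_qPow_polyXB hq' hν m x hy⟩
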